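/- (Main Theorem) Let (X,d) be a metric space, let P ⊆ X be a nonempty finite set, let k ≥ 1 with k ≤ |P|, let δ > 0, let Q ⊆ P be a δ-cover of P with |Q| ≥ k, and let C be a valid farthest-first output on Q with k centers. Then cost(C,P) ≤ 2·OPT(P,k) + δ. -/

import Mathlib

/-- `setDist s C` is the distance from the point `s` to the set `C`,
i.e. the infimum (for nonempty finite `C`, the minimum) of `dist s c` over `c ∈ C`. -/
noncomputable def setDist {X : Type*} [MetricSpace X] (s : X) (C : Set X) : ℝ :=
  sInf ((fun c => dist s c) '' C)

/-- `cost C S` is the supremum (for nonempty finite `S`, the maximum) over `s ∈ S`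
of the distance from `s` to the center set `C`. -/
noncomputable def cost {X : Type*} [MetricSpace X] (C S : Set X) : ℝ :=
  sSup ((fun s => setDist s C) '' S)

/-- `kOPT P k` is the optimal `k`-center cost on the finite set `P`. -/
noncomputable def kOPT {X : Type*} [MetricSpace X] (P : Finset X) (k : ℕ) : ℝ :=
  sInf { r : ℝ | ∃ C : Finset X, C ⊆ P ∧ C.card = k ∧ cost (C : Set X) (P : Set X) = r }

/-- `IsFF S k C` : `C` is a valid farthest-first output on `S` with `k` centers. -/
def IsFF {X : Type*} [MetricSpace X] (S : Finset X) (k : ℕ) (C : Finset X) : Prop :=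
  ∃ c : Fin k → X, Function.Injective c ∧ (∀ i, c i ∈ S) ∧
    (↑C : Set X) = Set.range c ∧
    ∀ i : Fin k, 0 < (i : ℕ) → ∀ s ∈ S,
      setDist s (c '' {j | j < i}) ≤ setDist (c i) (c '' {j | j < i})

/-!
Let `r = cost(C,Q)`, attained at `q ∈ Q`. Each farthest-first center was, when chosen, at least
as far from the earlier centers as `q` is, so the `k` centers together with `q` are `k + 1`
points of `P` pairwise at distance at least `r`. Two of them share a nearest center of an
optimal `k`-center solution, whence `r ≤ 2·OPT(P,k)` by the triangle inequality. Finally every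
point of `P` lies within `δ` of `Q`, so `cost(C,P) ≤ r + δ`.
-/

section SetDist

variable {X : Type*} [MetricSpace X]

lemma bddBelow_image_dist (s : X) (C : Set X) : BddBelow ((fun c => dist s c) '' C) :=
  ⟨0, by rintro _ ⟨c, _, rfl⟩; exact dist_nonneg⟩

lemma setDist_nonneg (s : X) (C : Set X) : 0 ≤ setDist s C :=
  Real.sInf_nonneg (by rintro _ ⟨c, _, rfl⟩; exact dist_nonneg)

lemma setDist_le_dist (s : X) {C : Set X} {c : X} (hc : c ∈ C) : setDist s C ≤ dist s c :=
  csInf_le (bddBelow_image_dist s C) ⟨c, hc, rfl⟩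

lemma setDist_anti (s : X) {C₁ C₂ : Set X} (h : C₁ ⊆ C₂) (hne : C₁.Nonempty) :
    setDist s C₂ ≤ setDist s C₁ :=
  csInf_le_csInf (bddBelow_image_dist s C₂) (hne.image _) (Set.image_mono h)

lemma Set.Finite.exists_setDist_eq {C : Set X} (hC : C.Finite) (hne : C.Nonempty) (s : X) :
    ∃ c ∈ C, setDist s C = dist s c := by
  obtain ⟨c, hc, hcs⟩ := (hne.image (fun c => dist s c)).csInf_mem (hC.image _)
  exact ⟨c, hc, hcs.symm⟩

lemma setDist_le_dist_add_setDist {C : Set X} (hC : C.Finite) (hne : C.Nonempty) (p q : X) :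
    setDist p C ≤ dist p q + setDist q C := by
  obtain ⟨c, hc, hqc⟩ := hC.exists_setDist_eq hne q
  calc setDist p C ≤ dist p c := setDist_le_dist p hc
    _ ≤ dist p q + dist q c := dist_triangle p q c
    _ = dist p q + setDist q C := by rw [hqc]

lemma cost_nonneg (C S : Set X) : 0 ≤ cost C S :=
  Real.sSup_nonneg (by rintro _ ⟨s, _, rfl⟩; exact setDist_nonneg s C)

lemma cost_le {C S : Set X} {M : ℝ} (hS : S.Nonempty) (h : ∀ s ∈ S, setDist s C ≤ M) :
    cost C S ≤ M :=
  csSup_le (hS.image _) (by rintro _ ⟨s, hs, rfl⟩; exact h s hs)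

lemma setDist_le_cost {C S : Set X} (hS : S.Finite) {s : X} (hs : s ∈ S) :
    setDist s C ≤ cost C S :=
  le_csSup (hS.image _).bddAbove ⟨s, hs, rfl⟩

lemma Set.Finite.exists_cost_eq {S : Set X} (hS : S.Finite) (hne : S.Nonempty) (C : Set X) :
    ∃ s ∈ S, cost C S = setDist s C := by
  obtain ⟨s, hs, hsC⟩ := (hne.image (fun s => setDist s C)).csSup_mem (hS.image _)
  exact ⟨s, hs, hsC.symm⟩

lemma cost_le_cost_add_of_forall_exists_dist_le {C S T : Set X} {δ : ℝ} (hC : C.Finite)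
    (hCne : C.Nonempty) (hS : S.Nonempty) (hT : T.Finite)
    (hcover : ∀ p ∈ S, ∃ q ∈ T, dist p q ≤ δ) :
    cost C S ≤ cost C T + δ := by
  refine cost_le hS fun p hp => ?_
  obtain ⟨q, hq, hpq⟩ := hcover p hp
  linarith [setDist_le_dist_add_setDist hC hCne p q, setDist_le_cost (C := C) hT hq]

lemma exists_card_eq_cost_eq_kOPT {P : Finset X} {k : ℕ} (hk : k ≤ P.card) :
    ∃ C ⊆ P, C.card = k ∧ cost (C : Set X) (P : Set X) = kOPT P k := by
  set costs := {r : ℝ | ∃ C : Finset X, C ⊆ P ∧ C.card = k ∧ cost (C : Set X) (P : Set X) = r}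
  have hfin : costs.Finite := by
    refine ((P.powerset : Set (Finset X)).toFinite.image
      fun C : Finset X => cost (C : Set X) (P : Set X)).subset ?_
    rintro _ ⟨C, hCP, _, rfl⟩
    exact ⟨C, by simpa using hCP, rfl⟩
  have hne : costs.Nonempty := by
    obtain ⟨C, hCP, hC⟩ := Finset.exists_subset_card_eq hk
    exact ⟨_, C, hCP, hC, rfl⟩
  obtain ⟨C, hCP, hC, hcost⟩ := hne.csInf_mem hfin
  exact ⟨C, hCP, hC, hcost⟩

lemma le_two_mul_cost_of_pairwise_le_dist {A C' : Finset X} {S : Set X} {r : ℝ}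
    (hS : S.Finite) (hAS : (A : Set X) ⊆ S) (hC' : C'.Nonempty) (hcard : C'.card < A.card)
    (hA : (A : Set X).Pairwise fun a b => r ≤ dist a b) :
    r ≤ 2 * cost (C' : Set X) S := by
  have hnearest : ∀ a, ∃ c ∈ C', setDist a (C' : Set X) = dist a c := fun a =>
    C'.finite_toSet.exists_setDist_eq (by exact_mod_cast hC') a
  choose g hgC' hg using hnearest
  obtain ⟨a, ha, b, hb, hab, hgab⟩ :=
    Finset.exists_ne_map_eq_of_card_lt_of_maps_to hcard fun a _ => hgC' a
  have hbound : ∀ x ∈ A, dist x (g x) ≤ cost (C' : Set X) S := fun x hx =>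
    hg x ▸ setDist_le_cost hS (hAS hx)
  calc r ≤ dist a b := hA ha hb hab
    _ ≤ dist a (g a) + dist b (g b) := by
      rw [hgab, dist_comm b]; exact dist_triangle a (g b) b
    _ ≤ 2 * cost (C' : Set X) S := by linarith [hbound a ha, hbound b hb]

end SetDist

namespace IsFF

variable {X : Type*} [MetricSpace X] {S C : Finset X} {k : ℕ}

lemma subset (hC : IsFF S k C) : C ⊆ S := by
  obtain ⟨c, -, hcS, hCc, -⟩ := hC
  intro x hx
  obtain ⟨i, rfl⟩ := (Set.ext_iff.mp hCc x).mp hx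
  exact hcS i

lemma card_eq (hC : IsFF S k C) : C.card = k := by
  classical
  obtain ⟨c, hinj, -, hCc, -⟩ := hC
  have : C = Finset.univ.image c := Finset.coe_injective (by simpa using hCc)
  rw [this, Finset.card_image_of_injective _ hinj, Finset.card_univ, Fintype.card_fin]

lemma cost_le_dist (hC : IsFF S k C) {x y : X} (hx : x ∈ C) (hy : y ∈ C) (hxy : x ≠ y) :
    cost (C : Set X) (S : Set X) ≤ dist x y := by
  have hS : (S : Set X).Nonempty := ⟨x, hC.subset hx⟩
  obtain ⟨c, -, -, hCc, hfar⟩ := hC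
  rw [← Finset.mem_coe, hCc] at hx hy
  rw [hCc]
  obtain ⟨i, rfl⟩ := hx
  obtain ⟨j, rfl⟩ := hy
  have hlt : ∀ i j, i < j → ∀ s ∈ S, setDist s (Set.range c) ≤ dist (c i) (c j) := by
    intro i j hij s hs
    have hearlier : c '' {l | l < j} ⊆ Set.range c := Set.image_subset_range _ _
    calc setDist s (Set.range c) ≤ setDist s (c '' {l | l < j}) :=
          setDist_anti s hearlier ⟨c i, i, hij, rfl⟩
      _ ≤ setDist (c j) (c '' {l | l < j}) := hfar j (Nat.zero_lt_of_lt hij) s hs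
      _ ≤ dist (c j) (c i) := setDist_le_dist (c j) ⟨i, hij, rfl⟩
      _ = dist (c i) (c j) := dist_comm _ _
  refine cost_le hS fun s hs => ?_
  rcases lt_or_gt_of_ne (fun h : i = j => hxy (congrArg c h)) with hij | hji
  · exact hlt i j hij s hs
  · exact dist_comm (c j) (c i) ▸ hlt j i hji s hs

lemma cost_le_two_mul_kOPT (hC : IsFF S k C) (hk : 1 ≤ k) {P : Finset X} (hSP : S ⊆ P) :
    cost (C : Set X) (S : Set X) ≤ 2 * kOPT P k := by
  classical
  have hCne : C.Nonempty := Finset.card_pos.mp (hC.card_eq ▸ hk)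
  have hkP : k ≤ P.card := hC.card_eq ▸ Finset.card_le_card (hC.subset.trans hSP)
  obtain ⟨Copt, hCoptP, hCopt, hOPT⟩ := exists_card_eq_cost_eq_kOPT hkP
  have hSne : (S : Set X).Nonempty := by exact_mod_cast hCne.mono hC.subset
  obtain ⟨q, hqS, hq⟩ := S.finite_toSet.exists_cost_eq hSne (C : Set X)
  by_cases hqC : q ∈ C
  · have : cost (C : Set X) (S : Set X) ≤ 0 := by
      simpa [hq] using setDist_le_dist q (C := (C : Set X)) hqC
    linarith [cost_nonneg (Copt : Set X) (P : Set X)]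
  · have hpair : (↑(insert q C) : Set X).Pairwise fun a b =>
        cost (C : Set X) (S : Set X) ≤ dist a b := by
      rw [Finset.coe_insert, Set.pairwise_insert]
      refine ⟨fun x hx y hy hxy => hC.cost_le_dist hx hy hxy, fun x hx _ => ?_⟩
      have hqx : cost (C : Set X) (S : Set X) ≤ dist q x := hq ▸ setDist_le_dist q hx
      exact ⟨hqx, dist_comm q x ▸ hqx⟩
    have hsub : (↑(insert q C) : Set X) ⊆ P :=
      Finset.coe_subset.mpr (Finset.insert_subset (hSP hqS) (hC.subset.trans hSP))
    have hcard : Copt.card < (insert q C).card := by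
      rw [Finset.card_insert_of_notMem hqC, hC.card_eq, hCopt]; omega
    rw [← hOPT]
    exact le_two_mul_cost_of_pairwise_le_dist P.finite_toSet hsub
      (Finset.card_pos.mp (hCopt ▸ hk)) hcard hpair

end IsFF

theorem stmt_12_general {X : Type*} [MetricSpace X] (P : Finset X)
    (k : ℕ) (hk : 1 ≤ k)
    (δ : ℝ)
    (Q : Finset X) (hQP : Q ⊆ P)
    (hcover : ∀ p ∈ P, ∃ q ∈ Q, dist p q ≤ δ)
    (C : Finset X) (hC : IsFF Q k C) :
    cost (C : Set X) (P : Set X) ≤ 2 * kOPT P k + δ := by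
  obtain ⟨c, hc⟩ : C.Nonempty := Finset.card_pos.mp (hC.card_eq ▸ hk)
  calc cost (C : Set X) (P : Set X) ≤ cost (C : Set X) (Q : Set X) + δ :=
        cost_le_cost_add_of_forall_exists_dist_le C.finite_toSet ⟨c, hc⟩
          ⟨c, hQP (hC.subset hc)⟩ Q.finite_toSet hcover
    _ ≤ 2 * kOPT P k + δ := by gcongr; exact hC.cost_le_two_mul_kOPT hk hQP

/-- Main theorem: if `Q ⊆ P` is a `δ`-cover of `P` with `|Q| ≥ k` and `C` is a
valid farthest-first output on `Q` with `k` centers, then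
`cost(C,P) ≤ 2·OPT(P,k) + δ`. -/
theorem stmt_12 {X : Type*} [MetricSpace X] (P : Finset X) (hP : P.Nonempty)
    (k : ℕ) (hk : 1 ≤ k) (hkP : k ≤ P.card)
    (δ : ℝ) (hδ : 0 < δ)
    (Q : Finset X) (hQP : Q ⊆ P)
    (hcover : ∀ p ∈ P, ∃ q ∈ Q, dist p q ≤ δ)
    (hkQ : k ≤ Q.card)
    (C : Finset X) (hC : IsFF Q k C) :
    cost (C : Set X) (P : Set X) ≤ 2 * kOPT P k + δ :=
  stmt_12_general P k hk δ Q hQP hcover C hC
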